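/- Let K be a field of characteristic 0, p an odd prime, a,b,c,d indeterminates, Δ = a^p d^p − b^p c^p, and v, w as in the split symmetric case: v = b^p d^p(2^p(a^p d^p+b^p c^p)−2(ad+bc)^p)/Δ^2, w = a^p c^p(2^p(a^p d^p+b^p c^p)−2(ad+bc)^p)/Δ^2. Then v ≠ 0 and w ≠ 0 in K(a,b,c,d), and vw is a square in K(a,b,c,d) times a^p b^p c^p d^p; in particular vw is not a square in K(a,b,c,d), and 1 is not an eigenvalue of the matrix ((u,v),(w,u)) for the corresponding u. -/

import Mathlib

/-!
With `Δ = a^p d^p - b^p c^p` and `T = 2^p (a^p d^p + b^p c^p) - 2 (ad + bc)^p` one has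
`vw = (T/Δ²)² (abcd)^p`, and `T, Δ ≠ 0` since at `(a,b,c,d) = (1,0,0,1)` they become `2^p - 2`
and `1`. As `p` is odd, `vw` is then a square iff `abcd` is, and `abcd` is not a square in
`K(a,b,c,d)`: `K[a,b,c,d]` is integrally closed and `a` is a prime not dividing `bcd`.
Finally `charpoly ((u,v),(w,u))` evaluated at `t` is `(t - u)² - vw`, so it has no root at all.
-/

open MvPolynomial

noncomputable section

/-- The rational function field `E = K(a,b,c,d)`, realized as the fraction field of the
polynomial ring in the four indeterminates `a, b, c, d`. -/
abbrev E (K : Type) [Field K] := FractionRing (MvPolynomial (Fin 4) K)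

/-- The transcendental generator `a` of `E = K(a,b,c,d)`. -/
def va (K : Type) [Field K] : E K := algebraMap (MvPolynomial (Fin 4) K) (E K) (X 0)
/-- The transcendental generator `b` of `E = K(a,b,c,d)`. -/
def vb (K : Type) [Field K] : E K := algebraMap (MvPolynomial (Fin 4) K) (E K) (X 1)
/-- The transcendental generator `c` of `E = K(a,b,c,d)`. -/
def vc (K : Type) [Field K] : E K := algebraMap (MvPolynomial (Fin 4) K) (E K) (X 2)
/-- The transcendental generator `d` of `E = K(a,b,c,d)`. -/
def vd (K : Type) [Field K] : E K := algebraMap (MvPolynomial (Fin 4) K) (E K) (X 3)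

theorem Prime.not_isSquare_mul {R : Type*} [CommMonoidWithZero R] [IsCancelMulZero R] {π r : R}
    (hπ : Prime π) (hr : ¬π ∣ r) : ¬IsSquare (π * r) := by
  rintro ⟨y, hy⟩
  obtain ⟨z, rfl⟩ : π ∣ y := hπ.dvd_of_dvd_pow (n := 2) ⟨r, by rw [sq, ← hy]⟩
  refine hr ⟨z * z, mul_left_cancel₀ hπ.ne_zero ?_⟩
  rw [hy]
  ac_rfl

theorem IsIntegrallyClosed.isSquare_of_isSquare_algebraMap {R F : Type*} [CommRing R]
    [IsDomain R] [IsIntegrallyClosed R] [Field F] [Algebra R F] [IsFractionRing R F] {r : R}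
    (h : IsSquare (algebraMap R F r)) : IsSquare r := by
  obtain ⟨s, hs⟩ := h
  have hint : IsIntegral R s := by
    refine ⟨Polynomial.X ^ 2 - Polynomial.C r, Polynomial.monic_X_pow_sub_C r two_ne_zero, ?_⟩
    simp [hs, sq]
  obtain ⟨y, rfl⟩ := IsIntegrallyClosed.isIntegral_iff.mp hint
  exact ⟨y, IsFractionRing.injective R F (by rw [hs, map_mul])⟩

theorem not_isSquare_sq_mul_pow {F : Type*} [CommGroupWithZero F] {x s : F}
    (hx : ¬IsSquare x) (hs : s ≠ 0) {n : ℕ} (hn : Odd n) : ¬IsSquare (s ^ 2 * x ^ n) := by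
  intro hsq
  obtain ⟨k, rfl⟩ := hn
  have hx0 : x ≠ 0 := by
    rintro rfl
    exact hx IsSquare.zero
  have hquot : s ^ 2 * x ^ (2 * k + 1) / (s * x ^ k) ^ 2 = x := by
    rw [div_eq_iff (pow_ne_zero 2 (mul_ne_zero hs (pow_ne_zero k hx0))), mul_pow, ← pow_mul,
      pow_succ x, mul_comm k 2, mul_comm (x ^ (2 * k)), mul_left_comm]
  exact hx (hquot ▸ hsq.div (IsSquare.sq (s * x ^ k)))

theorem Matrix.isSquare_mul_of_isRoot_charpoly {R : Type*} [CommRing R] [Nontrivial R]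
    {u v w t : R} (h : (!![u, v; w, u]).charpoly.IsRoot t) : IsSquare (v * w) := by
  rw [Matrix.charpoly_fin_two, Polynomial.IsRoot.def] at h
  simp only [Polynomial.eval_add, Polynomial.eval_sub, Polynomial.eval_pow, Polynomial.eval_mul,
    Polynomial.eval_X, Polynomial.eval_C, Matrix.trace_fin_two_of, Matrix.det_fin_two_of] at h
  exact ⟨t - u, by linear_combination -h⟩

theorem MvPolynomial.algebraMap_ne_zero_of_eval_ne_zero {σ K F : Type*} [Field K] [Field F]
    [Algebra (MvPolynomial σ K) F] [IsFractionRing (MvPolynomial σ K) F]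
    {q : MvPolynomial σ K} (x : σ → K) (h : eval x q ≠ 0) :
    algebraMap (MvPolynomial σ K) F q ≠ 0 := by
  rw [map_ne_zero_iff _ (IsFractionRing.injective _ F)]
  rintro rfl
  exact h (map_zero _)

theorem not_isSquare_va_mul_vb_mul_vc_mul_vd (K : Type) [Field K] :
    ¬IsSquare (va K * vb K * vc K * vd K) := by
  have hX : ¬(X 0 : MvPolynomial (Fin 4) K) ∣ X 1 * X 2 * X 3 := fun h => by
    simpa using (eval ![0, 1, 1, 1]).map_dvd h
  refine fun hsq => Prime.not_isSquare_mul (X_prime (R := K)) hX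
    (IsIntegrallyClosed.isSquare_of_isSquare_algebraMap (F := E K) ?_)
  simpa [va, vb, vc, vd, mul_assoc] using hsq

theorem va_pow_mul_vd_pow_sub_ne_zero (K : Type) [Field K] {p : ℕ} (hp : p ≠ 0) :
    va K ^ p * vd K ^ p - vb K ^ p * vc K ^ p ≠ 0 := by
  have := algebraMap_ne_zero_of_eval_ne_zero (F := E K) ![1, 0, 0, 1]
    (q := (X 0 ^ p * X 3 ^ p - X 1 ^ p * X 2 ^ p : MvPolynomial (Fin 4) K)) (by simp [hp])
  simpa [va, vb, vc, vd] using this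

theorem two_pow_mul_add_sub_two_mul_pow_ne_zero (K : Type) [Field K] [CharZero K] {p : ℕ}
    (hp : 1 < p) : 2 ^ p * (va K ^ p * vd K ^ p + vb K ^ p * vc K ^ p)
      - 2 * (va K * vd K + vb K * vc K) ^ p ≠ 0 := by
  have h2p : (2 : K) ^ p ≠ 2 := by
    exact_mod_cast (Nat.pow_right_injective le_rfl).ne hp.ne'
  have := algebraMap_ne_zero_of_eval_ne_zero (F := E K) ![1, 0, 0, 1]
    (q := (2 ^ p * (X 0 ^ p * X 3 ^ p + X 1 ^ p * X 2 ^ p) - 2 * (X 0 * X 3 + X 1 * X 2) ^ p :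
      MvPolynomial (Fin 4) K))
    (by simp [(zero_lt_one.trans hp).ne', sub_eq_zero, h2p])
  simpa [va, vb, vc, vd, map_ofNat] using this

theorem stmt18_general (K : Type) [Field K] [CharZero K] (p : ℕ) (hp : p.Prime) (hodd : Odd p)
    (a b c d : E K) (ha : a = va K) (hb : b = vb K) (hc : c = vc K) (hd : d = vd K)
    (u v w : E K)
    (hv : v = b ^ p * d ^ p * (2 ^ p * (a ^ p * d ^ p + b ^ p * c ^ p)
          - 2 * (a * d + b * c) ^ p) / (a ^ p * d ^ p - b ^ p * c ^ p) ^ 2)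
    (hw : w = a ^ p * c ^ p * (2 ^ p * (a ^ p * d ^ p + b ^ p * c ^ p)
          - 2 * (a * d + b * c) ^ p) / (a ^ p * d ^ p - b ^ p * c ^ p) ^ 2) :
    v ≠ 0 ∧ w ≠ 0 ∧
    (∃ s : E K, v * w = s ^ 2 * (a ^ p * b ^ p * c ^ p * d ^ p)) ∧
    ¬ IsSquare (v * w) ∧
    ¬ (Matrix.charpoly (!![u, v; w, u] : Matrix (Fin 2) (Fin 2) (E K))).IsRoot 1 := by
  subst ha hb hc hd
  set s := (2 ^ p * (va K ^ p * vd K ^ p + vb K ^ p * vc K ^ p)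
      - 2 * (va K * vd K + vb K * vc K) ^ p) / (va K ^ p * vd K ^ p - vb K ^ p * vc K ^ p) ^ 2
  have hvw : v * w = s ^ 2 * (va K ^ p * vb K ^ p * vc K ^ p * vd K ^ p) := by
    rw [hv, hw]
    ring
  have hnsq : ¬IsSquare (v * w) := by
    rw [hvw, ← mul_pow, ← mul_pow, ← mul_pow]
    exact not_isSquare_sq_mul_pow (not_isSquare_va_mul_vb_mul_vc_mul_vd K)
      (div_ne_zero (two_pow_mul_add_sub_two_mul_pow_ne_zero K hp.one_lt)
        (pow_ne_zero 2 (va_pow_mul_vd_pow_sub_ne_zero K hp.ne_zero))) hodd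
  have hvw0 : v * w ≠ 0 := fun h => hnsq (h ▸ IsSquare.zero)
  exact ⟨left_ne_zero_of_mul hvw0, right_ne_zero_of_mul hvw0, ⟨s, hvw⟩, hnsq,
    fun h => hnsq (Matrix.isSquare_mul_of_isRoot_charpoly h)⟩

/-- With `u, v, w` as in the split symmetric case over `E = K(a,b,c,d)` (`K` of
characteristic zero, `p` an odd prime): `v ≠ 0`, `w ≠ 0`, `vw` is a square in `E` times
`a^p b^p c^p d^p`; in particular `vw` is not a square in `E`, and `1` is not an eigenvalue
of the matrix `((u,v),(w,u))` (i.e. `1` is not a root of its characteristic polynomial). -/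
theorem stmt18 (K : Type) [Field K] [CharZero K] (p : ℕ) (hp : p.Prime) (hodd : Odd p)
    (a b c d : E K) (ha : a = va K) (hb : b = vb K) (hc : c = vc K) (hd : d = vd K)
    (u v w : E K)
    (hu : u = ((a ^ p * d ^ p + b ^ p * c ^ p) * (a * d + b * c) ^ p
          - 2 ^ (p + 1) * a ^ p * b ^ p * c ^ p * d ^ p)
        / (a ^ p * d ^ p - b ^ p * c ^ p) ^ 2)
    (hv : v = b ^ p * d ^ p * (2 ^ p * (a ^ p * d ^ p + b ^ p * c ^ p)
          - 2 * (a * d + b * c) ^ p) / (a ^ p * d ^ p - b ^ p * c ^ p) ^ 2)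
    (hw : w = a ^ p * c ^ p * (2 ^ p * (a ^ p * d ^ p + b ^ p * c ^ p)
          - 2 * (a * d + b * c) ^ p) / (a ^ p * d ^ p - b ^ p * c ^ p) ^ 2) :
    v ≠ 0 ∧ w ≠ 0 ∧
    (∃ s : E K, v * w = s ^ 2 * (a ^ p * b ^ p * c ^ p * d ^ p)) ∧
    ¬ IsSquare (v * w) ∧
    ¬ (Matrix.charpoly (!![u, v; w, u] : Matrix (Fin 2) (Fin 2) (E K))).IsRoot 1 :=
  stmt18_general K p hp hodd a b c d ha hb hc hd u v w hv hw
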